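/- For probability distributions P and Q on the reals and any real numbers Δ₁, Δ₂ ≥ 0, define f(P,Δ) := sup{δ > 0 : ∃ L ∈ ℝ, P((-∞,L]) ≥ δ and P([L+Δ,∞)) ≥ δ}. Then f(P⋆Q, Δ₁+Δ₂) ≥ f(P,Δ₁)·f(Q,Δ₂), where P⋆Q denotes the convolution (the distribution of the sum of independent samples from P and Q). -/
import Mathlib


open MeasureTheory Set

/-- The convolution of two measures on ℝ: the law of the sum of independent samples. -/
noncomputable def convMeasure (P Q : Measure ℝ) : Measure ℝ :=
  (P.prod Q).map (fun p => p.1 + p.2)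

/-- `fPD P Δ` is the supremum of `δ > 0` such that for some `L`,
`P((-∞,L]) ≥ δ` and `P([L+Δ,∞)) ≥ δ` (with value `0` if no such `δ` exists). -/
noncomputable def fPD (P : Measure ℝ) (Δ : ℝ) : ℝ :=
  sSup ({0} ∪ {δ : ℝ | 0 < δ ∧ ∃ L : ℝ,
    δ ≤ (P (Iic L)).toReal ∧ δ ≤ (P (Ici (L + Δ))).toReal})

lemma convMeasure_isProb (P Q : Measure ℝ) [IsProbabilityMeasure P] [IsProbabilityMeasure Q] :
    IsProbabilityMeasure (convMeasure P Q) := by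
  unfold convMeasure
  exact Measure.isProbabilityMeasure_map (by fun_prop)

lemma conv_ge (P Q : Measure ℝ) [SFinite Q] (A B C : Set ℝ)
    (hC : MeasurableSet C) (h : ∀ x ∈ A, ∀ y ∈ B, x + y ∈ C) :
    P A * Q B ≤ convMeasure P Q C := by
  rw [convMeasure, Measure.map_apply (by fun_prop) hC]
  calc P A * Q B = (P.prod Q) (A ×ˢ B) := (Measure.prod_prod ..).symm
    _ ≤ _ := measure_mono fun p hp => h p.1 hp.1 p.2 hp.2

lemma fPD_set_bdd (P : Measure ℝ) [IsProbabilityMeasure P] (Δ : ℝ) :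
    BddAbove ({0} ∪ {δ : ℝ | 0 < δ ∧ ∃ L : ℝ,
      δ ≤ (P (Iic L)).toReal ∧ δ ≤ (P (Ici (L + Δ))).toReal}) := by
  refine ⟨1, ?_⟩
  rintro x (hx | ⟨hx, L, hL1, hL2⟩)
  · simp_all
  · refine hL1.trans ?_
    have : P (Iic L) ≤ 1 := prob_le_one
    simpa using ENNReal.toReal_mono ENNReal.one_ne_top this

theorem fPD_conv_add (P Q : Measure ℝ) [IsProbabilityMeasure P] [IsProbabilityMeasure Q]
    (Δ₁ Δ₂ : ℝ) (h₁ : 0 ≤ Δ₁) (h₂ : 0 ≤ Δ₂) :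
    fPD P Δ₁ * fPD Q Δ₂ ≤ fPD (convMeasure P Q) (Δ₁ + Δ₂) := by
  have hconv : IsProbabilityMeasure (convMeasure P Q) := convMeasure_isProb P Q
  set A := ({0} ∪ {δ : ℝ | 0 < δ ∧ ∃ L : ℝ,
    δ ≤ (P (Iic L)).toReal ∧ δ ≤ (P (Ici (L + Δ₁))).toReal}) with hA
  set B := ({0} ∪ {δ : ℝ | 0 < δ ∧ ∃ L : ℝ,
    δ ≤ (Q (Iic L)).toReal ∧ δ ≤ (Q (Ici (L + Δ₂))).toReal}) with hB
  set C := ({0} ∪ {δ : ℝ | 0 < δ ∧ ∃ L : ℝ,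
    δ ≤ ((convMeasure P Q) (Iic L)).toReal ∧
    δ ≤ ((convMeasure P Q) (Ici (L + (Δ₁ + Δ₂)))).toReal}) with hCdef
  have hCbdd : BddAbove C := fPD_set_bdd (convMeasure P Q) (Δ₁ + Δ₂)
  have hc0 : (0 : ℝ) ≤ sSup C := le_csSup hCbdd (Or.inl rfl)
  -- key: products of positive members are in C
  have key : ∀ x ∈ A, ∀ y ∈ B, x * y ≤ sSup C := by
    rintro x (hx | ⟨hx, L₁, hx1, hx2⟩) y hy
    · simp only [mem_singleton_iff] at hx; simp [hx, hc0]
    rcases hy with hy | ⟨hy, L₂, hy1, hy2⟩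
    · simp only [mem_singleton_iff] at hy; simp [hy, hc0]
    refine le_csSup hCbdd (Or.inr ⟨mul_pos hx hy, L₁ + L₂, ?_, ?_⟩)
    · have hmeas : P (Iic L₁) * Q (Iic L₂) ≤ convMeasure P Q (Iic (L₁ + L₂)) :=
        conv_ge P Q _ _ _ measurableSet_Iic
          (fun a ha b hb => by simp only [mem_Iic] at *; linarith)
      calc x * y ≤ (P (Iic L₁)).toReal * (Q (Iic L₂)).toReal :=
            mul_le_mul hx1 hy1 hy.le ENNReal.toReal_nonneg
        _ = (P (Iic L₁) * Q (Iic L₂)).toReal := (ENNReal.toReal_mul).symm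
        _ ≤ _ := ENNReal.toReal_mono (measure_ne_top _ _) hmeas
    · have hmeas : P (Ici (L₁ + Δ₁)) * Q (Ici (L₂ + Δ₂)) ≤
          convMeasure P Q (Ici (L₁ + L₂ + (Δ₁ + Δ₂))) :=
        conv_ge P Q _ _ _ measurableSet_Ici
          (fun a ha b hb => by simp only [mem_Ici] at *; linarith)
      calc x * y ≤ (P (Ici (L₁ + Δ₁))).toReal * (Q (Ici (L₂ + Δ₂))).toReal :=
            mul_le_mul hx2 hy2 hy.le ENNReal.toReal_nonneg
        _ = (P (Ici (L₁ + Δ₁)) * Q (Ici (L₂ + Δ₂))).toReal := (ENNReal.toReal_mul).symm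
        _ ≤ _ := ENNReal.toReal_mono (measure_ne_top _ _) hmeas
  have hAne : A.Nonempty := ⟨0, Or.inl rfl⟩
  have hBne : B.Nonempty := ⟨0, Or.inl rfl⟩
  show sSup A * sSup B ≤ sSup C
  have hb0 : (0 : ℝ) ≤ sSup B := le_csSup (fPD_set_bdd Q Δ₂) (Or.inl rfl)
  rcases eq_or_lt_of_le hb0 with hb | hb
  · rw [← hb, mul_zero]; exact hc0
  rw [← le_div_iff₀ hb]
  refine csSup_le hAne fun x hxA => ?_
  rw [le_div_iff₀ hb]
  rcases le_or_gt x 0 with hx | hx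
  · exact le_trans (mul_nonpos_of_nonpos_of_nonneg hx hb0) hc0
  rw [mul_comm, ← le_div_iff₀ hx]
  refine csSup_le hBne fun y hyB => ?_
  rw [le_div_iff₀ hx, mul_comm]
  exact key x hxA y hyB
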